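/- arXiv:1110.0127 — 5 statements merged into one kernel-verified Lean document; each statement's English description precedes it below -/
import Mathlib

section
/- Let G. be a simplicial group. For each n ≥ 1 and each k with -1 ≤ k < n-1, the sequence G^{k+1}_{n+1} → G^k_{n+1} → G^k_n is split exact, where G^k_m denotes the intersection of the kernels of the face maps ∂_0,...,∂_k : G_m → G_{m-1} (with G^{-1}_m = G_m), the surjection G^k_{n+1} → G^k_n is induced by ∂_{k+1}, and the splitting is induced by the degeneracy s_{k+1}. -/
/-! For `i < K` the simplicial identities `∂ᵢ ∂_K = ∂_{K-1} ∂ᵢ` and `∂ᵢ s_K = s_{K-1} ∂ᵢ`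
show that `∂_K` and `s_K` preserve the intersection of the kernels of `∂₀, …, ∂_{K-1}`,
and `∂_K s_K = id` splits the surjection. -/

section

variable {G : ℕ → Type*} [∀ n, Group (G n)] {d : ∀ n, ℕ → (G (n + 1) →* G n)}
  {s : ∀ n, ℕ → (G n →* G (n + 1))}

theorem face_preserves_faces_eq_one
    (hdd : ∀ n, ∀ i j : ℕ, i < j → j ≤ n + 2 →
      ∀ x : G (n + 2), d n i (d (n + 1) j x) = d n (j - 1) (d (n + 1) i x))
    {m K : ℕ} (hK : K ≤ m + 2) {x : G (m + 2)} (hx : ∀ i < K, d (m + 1) i x = 1) :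
    ∀ i < K, d m i (d (m + 1) K x) = 1 := by
  intro i hi
  rw [hdd m i K hi hK x, hx i hi, map_one]

theorem degeneracy_preserves_faces_eq_one
    (hds_lt : ∀ n, ∀ i j : ℕ, i < j → j ≤ n + 1 →
      ∀ x : G (n + 1), d (n + 1) i (s (n + 1) j x) = s n (j - 1) (d n i x))
    {m K : ℕ} (hK : K ≤ m + 1) {y : G (m + 1)} (hy : ∀ i < K, d m i y = 1) :
    ∀ i < K, d (m + 1) i (s (m + 1) K y) = 1 := by
  intro i hi
  rw [hds_lt m i K hi hK y, hy i hi, map_one]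

end

theorem statement0_general
    (G : ℕ → Type*) [∀ n, Group (G n)]
    (d : ∀ n, ℕ → (G (n + 1) →* G n))
    (s : ∀ n, ℕ → (G n →* G (n + 1)))
    -- simplicial identities
    (hdd : ∀ n, ∀ i j : ℕ, i < j → j ≤ n + 2 →
      ∀ x : G (n + 2), d n i (d (n + 1) j x) = d n (j - 1) (d (n + 1) i x))
    (hds_lt : ∀ n, ∀ i j : ℕ, i < j → j ≤ n + 1 →
      ∀ x : G (n + 1), d (n + 1) i (s (n + 1) j x) = s n (j - 1) (d n i x))
    (hds_eq : ∀ n, ∀ j : ℕ, j ≤ n → ∀ x : G n, d n j (s n j x) = x)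
    -- `n = m + 1 ≥ 1`
    (m : ℕ) (K : ℕ) (hK : K < m + 1) :
    -- (a) ∂_K maps G^k_{n+1} into G^k_n
    (∀ x : G (m + 2), (∀ i < K, d (m + 1) i x = 1) → ∀ i < K, d m i (d (m + 1) K x) = 1)
    ∧
    -- (b) exactness at the middle: G^{k+1}_{n+1} is exactly the kernel of
    --     ∂_K restricted to G^k_{n+1}
    (∀ x : G (m + 2), (∀ i < K + 1, d (m + 1) i x = 1) ↔ ((∀ i < K, d (m + 1) i x = 1) ∧ d (m + 1) K x = 1))
    ∧
    -- (c) split surjectivity: s_K splits ∂_K on G^k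
    (∀ y : G (m + 1), (∀ i < K, d m i y = 1) →
      (∀ i < K, d (m + 1) i (s (m + 1) K y) = 1) ∧ d (m + 1) K (s (m + 1) K y) = y) :=
  ⟨fun _ hx => face_preserves_faces_eq_one hdd (by omega) hx,
    fun _ => Nat.forall_lt_succ_right,
    fun y hy => ⟨degeneracy_preserves_faces_eq_one hds_lt (by omega) hy,
      hds_eq (m + 1) K (by omega) y⟩⟩

/-- For a simplicial group `G.`, for `n ≥ 1` and `-1 ≤ k < n-1`
(encoded by `K = k+1`, so `0 ≤ K < n`), the sequence
`G^{k+1}_{n+1} ↪ G^k_{n+1} ↠ G^k_n` is split exact, where `G^k_m` is the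
intersection of the kernels of `∂_0, …, ∂_k : G_m → G_{m-1}` (and `G^{-1}_m = G_m`),
the surjection is induced by `∂_{k+1} = ∂_K` and the splitting by `s_{k+1} = s_K`.

Here `d n i : G (n+1) →* G n` is the face map `∂_i` and `s n j : G n →* G (n+1)`
is the degeneracy `s_j`, subject to the simplicial identities. -/
theorem statement0
    (G : ℕ → Type*) [∀ n, Group (G n)]
    (d : ∀ n, ℕ → (G (n + 1) →* G n))
    (s : ∀ n, ℕ → (G n →* G (n + 1)))
    -- simplicial identities
    (hdd : ∀ n, ∀ i j : ℕ, i < j → j ≤ n + 2 →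
      ∀ x : G (n + 2), d n i (d (n + 1) j x) = d n (j - 1) (d (n + 1) i x))
    (hds_lt : ∀ n, ∀ i j : ℕ, i < j → j ≤ n + 1 →
      ∀ x : G (n + 1), d (n + 1) i (s (n + 1) j x) = s n (j - 1) (d n i x))
    (hds_eq : ∀ n, ∀ j : ℕ, j ≤ n → ∀ x : G n, d n j (s n j x) = x)
    (hds_eq' : ∀ n, ∀ j : ℕ, j ≤ n → ∀ x : G n, d n (j + 1) (s n j x) = x)
    (hds_gt : ∀ n, ∀ i j : ℕ, j + 1 < i → i ≤ n + 2 →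
      ∀ x : G (n + 1), d (n + 1) i (s (n + 1) j x) = s n j (d n (i - 1) x))
    (hss : ∀ n, ∀ i j : ℕ, i ≤ j → j ≤ n →
      ∀ x : G n, s (n + 1) i (s n j x) = s (n + 1) (j + 1) (s n i x))
    -- `n = m + 1 ≥ 1`
    (m : ℕ) (K : ℕ) (hK : K < m + 1) :
    -- (a) ∂_K maps G^k_{n+1} into G^k_n
    (∀ x : G (m + 2), (∀ i < K, d (m + 1) i x = 1) → ∀ i < K, d m i (d (m + 1) K x) = 1)
    ∧
    -- (b) exactness at the middle: G^{k+1}_{n+1} is exactly the kernel of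
    --     ∂_K restricted to G^k_{n+1}
    (∀ x : G (m + 2), (∀ i < K + 1, d (m + 1) i x = 1) ↔ ((∀ i < K, d (m + 1) i x = 1) ∧ d (m + 1) K x = 1))
    ∧
    -- (c) split surjectivity: s_K splits ∂_K on G^k
    (∀ y : G (m + 1), (∀ i < K, d m i y = 1) →
      (∀ i < K, d (m + 1) i (s (m + 1) K y) = 1) ∧ d (m + 1) K (s (m + 1) K y) = y) :=
  statement0_general G d s hdd hds_lt hds_eq m K hK
end

section
/- Let B. be a simplicial (not necessarily unital) ring with face maps ∂_i and degeneracies s_j. For n ≥ 1 let B^n_n = ∩_{i=0}^{n} ker(∂_i : B_n → B_{n-1}) and B^n_{n+1} = ∩_{i=0}^{n} ker(∂_i : B_{n+1} → B_n). Then for any a, b ∈ B^n_n, the element s_n(a)·(s_n(b) − s_{n-1}(b)) lies in B^n_{n+1} and ∂_{n+1}(s_n(a)·(s_n(b) − s_{n-1}(b))) = a·b. Consequently (B^n_n)² ⊆ ∂_{n+1}(B^n_{n+1}). -/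
/-!
Write `y = s_n(a) · (s_n(b) − s_{n-1}(b))`. For `i < n` the identity `∂_i s_n = s_{n-1} ∂_i`
kills the first factor, since `∂_i a = 0`; for `i = n` both `∂_n s_n` and `∂_n s_{n-1}` are the
identity, so the second factor maps to `b − b = 0`. Under `∂_{n+1}` the first factor becomes `a`,
`s_n(b)` becomes `b` and `s_{n-1}(b)` becomes `s_{n-1}(∂_n b) = 0`, so `∂_{n+1} y = a · b`.
-/

section SimplicialRing

variable {B : ℕ → Type*} [∀ n, NonUnitalRing (B n)]
  {d : ∀ n, ℕ → (B (n + 1) →ₙ+* B n)} {s : ∀ n, ℕ → (B n →ₙ+* B (n + 1))}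

theorem face_degen_eq_zero_of_face_eq_zero
    (hds_lt : ∀ n, ∀ i j : ℕ, i < j → j ≤ n + 1 →
      ∀ x : B (n + 1), d (n + 1) i (s (n + 1) j x) = s n (j - 1) (d n i x))
    {n i j : ℕ} (hij : i < j) (hj : j ≤ n + 1) {x : B (n + 1)} (hx : d n i x = 0) :
    d (n + 1) i (s (n + 1) j x) = 0 := by
  rw [hds_lt n i j hij hj, hx, map_zero]

theorem face_succ_degen_sub_degen_eq_zero
    (hds_eq : ∀ n, ∀ j : ℕ, j ≤ n → ∀ x : B n, d n j (s n j x) = x)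
    (hds_eq' : ∀ n, ∀ j : ℕ, j ≤ n → ∀ x : B n, d n (j + 1) (s n j x) = x)
    {n j : ℕ} (hj : j ≤ n) (x : B (n + 1)) :
    d (n + 1) (j + 1) (s (n + 1) (j + 1) x - s (n + 1) j x) = 0 := by
  rw [map_sub, hds_eq _ _ (by omega), hds_eq' _ _ (by omega), sub_self]

theorem face_top_degen_sub_degen_eq
    (hds_eq' : ∀ n, ∀ j : ℕ, j ≤ n → ∀ x : B n, d n (j + 1) (s n j x) = x)
    (hds_gt : ∀ n, ∀ i j : ℕ, j + 1 < i → i ≤ n + 2 →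
      ∀ x : B (n + 1), d (n + 1) i (s (n + 1) j x) = s n j (d n (i - 1) x))
    {m : ℕ} {x : B (m + 1)} (hx : d m (m + 1) x = 0) :
    d (m + 1) (m + 2) (s (m + 1) (m + 1) x - s (m + 1) m x) = x := by
  rw [map_sub, hds_eq' _ _ le_rfl, hds_gt m (m + 2) m (by omega) le_rfl, Nat.add_succ_sub_one, hx,
    map_zero, sub_zero]

theorem face_degen_mul_degen_sub_degen_eq_zero
    (hds_lt : ∀ n, ∀ i j : ℕ, i < j → j ≤ n + 1 →
      ∀ x : B (n + 1), d (n + 1) i (s (n + 1) j x) = s n (j - 1) (d n i x))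
    (hds_eq : ∀ n, ∀ j : ℕ, j ≤ n → ∀ x : B n, d n j (s n j x) = x)
    (hds_eq' : ∀ n, ∀ j : ℕ, j ≤ n → ∀ x : B n, d n (j + 1) (s n j x) = x)
    {m : ℕ} {a : B (m + 1)} (ha : ∀ i ≤ m, d m i a = 0) (b : B (m + 1)) {i : ℕ} (hi : i ≤ m + 1) :
    d (m + 1) i (s (m + 1) (m + 1) a * (s (m + 1) (m + 1) b - s (m + 1) m b)) = 0 := by
  rw [map_mul]
  rcases hi.lt_or_eq with hi | rfl
  · rw [face_degen_eq_zero_of_face_eq_zero hds_lt hi le_rfl (ha i (by omega)), zero_mul]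
  · rw [face_succ_degen_sub_degen_eq_zero hds_eq hds_eq' le_rfl, mul_zero]

theorem face_top_degen_mul_degen_sub_degen
    (hds_eq' : ∀ n, ∀ j : ℕ, j ≤ n → ∀ x : B n, d n (j + 1) (s n j x) = x)
    (hds_gt : ∀ n, ∀ i j : ℕ, j + 1 < i → i ≤ n + 2 →
      ∀ x : B (n + 1), d (n + 1) i (s (n + 1) j x) = s n j (d n (i - 1) x))
    {m : ℕ} (a : B (m + 1)) {b : B (m + 1)} (hb : d m (m + 1) b = 0) :
    d (m + 1) (m + 2) (s (m + 1) (m + 1) a * (s (m + 1) (m + 1) b - s (m + 1) m b)) = a * b := by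
  rw [map_mul, hds_eq' _ _ le_rfl, face_top_degen_sub_degen_eq hds_eq' hds_gt hb]

end SimplicialRing

theorem statement1_general
    (B : ℕ → Type*) [∀ n, NonUnitalRing (B n)]
    (d : ∀ n, ℕ → (B (n + 1) →ₙ+* B n))
    (s : ∀ n, ℕ → (B n →ₙ+* B (n + 1)))
    -- simplicial identities
    (hds_lt : ∀ n, ∀ i j : ℕ, i < j → j ≤ n + 1 →
      ∀ x : B (n + 1), d (n + 1) i (s (n + 1) j x) = s n (j - 1) (d n i x))
    (hds_eq : ∀ n, ∀ j : ℕ, j ≤ n → ∀ x : B n, d n j (s n j x) = x)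
    (hds_eq' : ∀ n, ∀ j : ℕ, j ≤ n → ∀ x : B n, d n (j + 1) (s n j x) = x)
    (hds_gt : ∀ n, ∀ i j : ℕ, j + 1 < i → i ≤ n + 2 →
      ∀ x : B (n + 1), d (n + 1) i (s (n + 1) j x) = s n j (d n (i - 1) x))
    -- `n = m + 1 ≥ 1`
    (m : ℕ) :
    (∀ a b : B (m + 1),
      (∀ i ≤ m + 1, d m i a = 0) → (∀ i ≤ m + 1, d m i b = 0) →
      (∀ i ≤ m + 1,
        d (m + 1) i (s (m + 1) (m + 1) a * (s (m + 1) (m + 1) b - s (m + 1) m b)) = 0) ∧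
      d (m + 1) (m + 2) (s (m + 1) (m + 1) a * (s (m + 1) (m + 1) b - s (m + 1) m b))
        = a * b)
    ∧
    -- consequently (B^n_n)² ⊆ ∂_{n+1}(B^n_{n+1})
    (∀ a b : B (m + 1),
      (∀ i ≤ m + 1, d m i a = 0) → (∀ i ≤ m + 1, d m i b = 0) →
      ∃ y : B (m + 2), (∀ i ≤ m + 1, d (m + 1) i y = 0) ∧ d (m + 1) (m + 2) y = a * b) := by
  refine (fun key => ⟨key, fun a b ha hb => ⟨_, key a b ha hb⟩⟩) ?_
  intro a b ha hb
  exact ⟨fun _ hi => face_degen_mul_degen_sub_degen_eq_zero hds_lt hds_eq hds_eq'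
      (fun i hi => ha i (by omega)) b hi,
    face_top_degen_mul_degen_sub_degen hds_eq' hds_gt a (hb (m + 1) le_rfl)⟩

/-- Let `B.` be a simplicial (possibly non-unital) ring, with face
maps `d n i : B (n+1) →ₙ+* B n` and degeneracies `s n j : B n →ₙ+* B (n+1)`
satisfying the simplicial identities.  Fix `n = m + 1 ≥ 1` and let
`B^n_n = ∩_{i=0}^{n} ker(∂_i : B_n → B_{n-1})` and
`B^n_{n+1} = ∩_{i=0}^{n} ker(∂_i : B_{n+1} → B_n)`.
Then for `a, b ∈ B^n_n`, the element `s_n(a) · (s_n(b) − s_{n-1}(b))` lies in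
`B^n_{n+1}` and `∂_{n+1}` of it equals `a · b`.  Consequently
`(B^n_n)² ⊆ ∂_{n+1}(B^n_{n+1})`. -/
theorem statement1
    (B : ℕ → Type*) [∀ n, NonUnitalRing (B n)]
    (d : ∀ n, ℕ → (B (n + 1) →ₙ+* B n))
    (s : ∀ n, ℕ → (B n →ₙ+* B (n + 1)))
    -- simplicial identities
    (hdd : ∀ n, ∀ i j : ℕ, i < j → j ≤ n + 2 →
      ∀ x : B (n + 2), d n i (d (n + 1) j x) = d n (j - 1) (d (n + 1) i x))
    (hds_lt : ∀ n, ∀ i j : ℕ, i < j → j ≤ n + 1 →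
      ∀ x : B (n + 1), d (n + 1) i (s (n + 1) j x) = s n (j - 1) (d n i x))
    (hds_eq : ∀ n, ∀ j : ℕ, j ≤ n → ∀ x : B n, d n j (s n j x) = x)
    (hds_eq' : ∀ n, ∀ j : ℕ, j ≤ n → ∀ x : B n, d n (j + 1) (s n j x) = x)
    (hds_gt : ∀ n, ∀ i j : ℕ, j + 1 < i → i ≤ n + 2 →
      ∀ x : B (n + 1), d (n + 1) i (s (n + 1) j x) = s n j (d n (i - 1) x))
    (hss : ∀ n, ∀ i j : ℕ, i ≤ j → j ≤ n →
      ∀ x : B n, s (n + 1) i (s n j x) = s (n + 1) (j + 1) (s n i x))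
    -- `n = m + 1 ≥ 1`
    (m : ℕ) :
    (∀ a b : B (m + 1),
      (∀ i ≤ m + 1, d m i a = 0) → (∀ i ≤ m + 1, d m i b = 0) →
      (∀ i ≤ m + 1,
        d (m + 1) i (s (m + 1) (m + 1) a * (s (m + 1) (m + 1) b - s (m + 1) m b)) = 0) ∧
      d (m + 1) (m + 2) (s (m + 1) (m + 1) a * (s (m + 1) (m + 1) b - s (m + 1) m b))
        = a * b)
    ∧
    -- consequently (B^n_n)² ⊆ ∂_{n+1}(B^n_{n+1})
    (∀ a b : B (m + 1),
      (∀ i ≤ m + 1, d m i a = 0) → (∀ i ≤ m + 1, d m i b = 0) →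
      ∃ y : B (m + 2), (∀ i ≤ m + 1, d (m + 1) i y = 0) ∧ d (m + 1) (m + 2) y = a * b) :=
  statement1_general B d s hds_lt hds_eq hds_eq' hds_gt m
end

section
/- Let A. be a simplicial C*-algebra (a simplicial object in the category of C*-algebras, with face and degeneracy maps being *-homomorphisms). Then for every n ≥ 1, the combinatorial homotopy group π_n(A.) = A^n_n / ∂_{n+1}(A^n_{n+1}) vanishes, where A^k_m = ∩_{i=0}^{k} ker(∂_i : A_m → A_{m-1}). -/
/-!
Write `N_k ⊆ A_k` for the common kernel of `∂_0, …, ∂_k`. For any simplicial ring and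
`u, v ∈ N_{m+1}`, the element `s_{m+1} u · (s_{m+1} v - s_m v)` lies in the common kernel of
`∂_0, …, ∂_{m+1}` and has last face `u v`, so `N_{m+1}²` lies in the image of the last face map.
In a C*-algebra, `N_{m+1}` is the common kernel of a family of *-homomorphisms and is therefore
closed under the continuous functional calculus. Writing `x ∈ N_{m+1}` as `ℜ x + i ℑ x` and
factoring a self-adjoint `h` as `f(h) g(h)` with `f(t) g(t) = t` and `f(0) = g(0) = 0` shows that
`N_{m+1} = N_{m+1}²`.
-/

open scoped CStarAlgebra ComplexStarModule

section Factorization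

variable {B : Type*} [NonUnitalCStarAlgebra B]

lemma cfcₙ_signedSqrt_mul_cfcₙ_sqrt_abs {h : B} (hh : IsSelfAdjoint h) :
    cfcₙ (fun t : ℝ => √(max t 0) - √(max (-t) 0)) h * cfcₙ (fun t : ℝ => √|t|) h = h := by
  rw [← cfcₙ_mul _ _ h]
  refine (cfcₙ_congr fun t _ => ?_).trans (cfcₙ_id' ℝ h)
  rcases le_total 0 t with ht | ht
  · simp [ht, abs_of_nonneg ht, Real.mul_self_sqrt ht]
  · simp [ht, abs_of_nonpos ht, Real.mul_self_sqrt (neg_nonneg.2 ht)]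

lemma map_cfcₙ_eq_zero {C : Type*} [NonUnitalCStarAlgebra C] (φ : B →⋆ₙₐ[ℂ] C) {f : ℝ → ℝ}
    (hf : Continuous f) (hf0 : f 0 = 0) {h : B} (hh : IsSelfAdjoint h) (hφ : φ h = 0) :
    φ (cfcₙ f h) = 0 := by
  rw [φ.map_cfcₙ f h, hφ, cfcₙ_apply_zero]

variable {ι : Type*} {C : ι → Type*} [∀ i, NonUnitalCStarAlgebra (C i)]

lemma IsSelfAdjoint.exists_mul_eq_of_map_eq_zero (φ : ∀ i, B →⋆ₙₐ[ℂ] C i) {h : B}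
    (hh : IsSelfAdjoint h) (hφ : ∀ i, φ i h = 0) :
    ∃ a b : B, (∀ i, φ i a = 0) ∧ (∀ i, φ i b = 0) ∧ a * b = h :=
  ⟨_, _, fun i => map_cfcₙ_eq_zero (φ i) (by fun_prop) (by simp) hh (hφ i),
    fun i => map_cfcₙ_eq_zero (φ i) (by fun_prop) (by simp) hh (hφ i),
    cfcₙ_signedSqrt_mul_cfcₙ_sqrt_abs hh⟩

theorem exists_mul_add_mul_eq_of_map_eq_zero (φ : ∀ i, B →⋆ₙₐ[ℂ] C i) {x : B}
    (hx : ∀ i, φ i x = 0) :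
    ∃ a b c e : B, (∀ i, φ i a = 0) ∧ (∀ i, φ i b = 0) ∧ (∀ i, φ i c = 0) ∧
      (∀ i, φ i e = 0) ∧ a * b + c * e = x := by
  obtain ⟨a, b, ha, hb, hab⟩ := (ℜ x).2.exists_mul_eq_of_map_eq_zero φ fun i => by
    rw [map_realPart, hx, map_zero, ZeroMemClass.coe_zero]
  obtain ⟨c, e, hc, he, hce⟩ := (ℑ x).2.exists_mul_eq_of_map_eq_zero φ fun i => by
    rw [map_imaginaryPart, hx, map_zero, ZeroMemClass.coe_zero]
  refine ⟨a, b, Complex.I • c, e, ha, hb, fun i => by rw [map_smul, hc, smul_zero], he, ?_⟩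
  rw [smul_mul_assoc, hab, hce, realPart_add_I_smul_imaginaryPart]

end Factorization

theorem exists_faces_eq_zero_and_face_eq_mul {A : ℕ → Type*} [∀ n, NonUnitalRing (A n)]
    (d : ∀ n, ℕ → (A (n + 1) →ₙ+* A n)) (s : ∀ n, ℕ → (A n →ₙ+* A (n + 1)))
    (hds_lt : ∀ n, ∀ i j : ℕ, i < j → j ≤ n + 1 →
      ∀ x : A (n + 1), d (n + 1) i (s (n + 1) j x) = s n (j - 1) (d n i x))
    (hds_eq : ∀ n, ∀ j : ℕ, j ≤ n → ∀ x : A n, d n j (s n j x) = x)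
    (hds_eq' : ∀ n, ∀ j : ℕ, j ≤ n → ∀ x : A n, d n (j + 1) (s n j x) = x)
    (hds_gt : ∀ n, ∀ i j : ℕ, j + 1 < i → i ≤ n + 2 →
      ∀ x : A (n + 1), d (n + 1) i (s (n + 1) j x) = s n j (d n (i - 1) x))
    {m : ℕ} {u v : A (m + 1)} (hu : ∀ i ≤ m, d m i u = 0) (hv : d m (m + 1) v = 0) :
    ∃ w : A (m + 2), (∀ i ≤ m + 1, d (m + 1) i w = 0) ∧ d (m + 1) (m + 2) w = u * v := by
  refine ⟨s (m + 1) (m + 1) u * (s (m + 1) (m + 1) v - s (m + 1) m v), fun i hi => ?_, ?_⟩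
  · rcases hi.lt_or_eq with hi | rfl
    · rw [map_mul, hds_lt m i (m + 1) hi le_rfl, hu i (Nat.lt_succ_iff.1 hi), map_zero, zero_mul]
    · simp only [map_mul, map_sub, hds_eq (m + 1) (m + 1) le_rfl, hds_eq' (m + 1) m m.le_succ,
        sub_self, mul_zero]
  · have hv' : d m (m + 2 - 1) v = 0 := hv
    rw [map_mul, map_sub, hds_eq' (m + 1) (m + 1) le_rfl u, hds_eq' (m + 1) (m + 1) le_rfl v,
      hds_gt m (m + 2) m (by omega) le_rfl, hv', map_zero, sub_zero]

theorem exists_faces_eq_zero_and_last_face_eq {A : ℕ → Type*} [∀ n, NonUnitalCStarAlgebra (A n)]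
    (d : ∀ n, ℕ → (A (n + 1) →⋆ₙₐ[ℂ] A n)) (s : ∀ n, ℕ → (A n →⋆ₙₐ[ℂ] A (n + 1)))
    (hds_lt : ∀ n, ∀ i j : ℕ, i < j → j ≤ n + 1 →
      ∀ x : A (n + 1), d (n + 1) i (s (n + 1) j x) = s n (j - 1) (d n i x))
    (hds_eq : ∀ n, ∀ j : ℕ, j ≤ n → ∀ x : A n, d n j (s n j x) = x)
    (hds_eq' : ∀ n, ∀ j : ℕ, j ≤ n → ∀ x : A n, d n (j + 1) (s n j x) = x)
    (hds_gt : ∀ n, ∀ i j : ℕ, j + 1 < i → i ≤ n + 2 →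
      ∀ x : A (n + 1), d (n + 1) i (s (n + 1) j x) = s n j (d n (i - 1) x))
    {m : ℕ} {x : A (m + 1)} (hx : ∀ i ≤ m + 1, d m i x = 0) :
    ∃ y : A (m + 2), (∀ i ≤ m + 1, d (m + 1) i y = 0) ∧ d (m + 1) (m + 2) y = x := by
  obtain ⟨a, b, c, e, ha, hb, hc, he, rfl⟩ :=
    exists_mul_add_mul_eq_of_map_eq_zero (fun i : Fin (m + 2) => d m i) fun i => hx i i.is_le
  have lift_mul {u v : A (m + 1)} (hu : ∀ i : Fin (m + 2), d m i u = 0)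
      (hv : ∀ i : Fin (m + 2), d m i v = 0) :
      ∃ w : A (m + 2), (∀ i ≤ m + 1, d (m + 1) i w = 0) ∧ d (m + 1) (m + 2) w = u * v :=
    exists_faces_eq_zero_and_face_eq_mul (fun n i => (d n i : A (n + 1) →ₙ+* A n))
      (fun n i => (s n i : A n →ₙ+* A (n + 1))) hds_lt hds_eq hds_eq' hds_gt
      (fun i hi => hu ⟨i, by omega⟩) (hv (Fin.last _))
  obtain ⟨w₁, hw₁, hw₁_last⟩ := lift_mul ha hb
  obtain ⟨w₂, hw₂, hw₂_last⟩ := lift_mul hc he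
  refine ⟨w₁ + w₂, fun i hi => ?_, ?_⟩
  · rw [map_add, hw₁ i hi, hw₂ i hi, add_zero]
  · rw [map_add, hw₁_last, hw₂_last]

theorem statement2_general
    (A : ℕ → Type*) [∀ n, NonUnitalCStarAlgebra (A n)]
    [∀ n, NormedSpace ℂ (A n)] [∀ n, IsScalarTower ℂ (A n) (A n)]
    [∀ n, SMulCommClass ℂ (A n) (A n)] [∀ n, StarModule ℂ (A n)]
    (d : ∀ n, ℕ → (A (n + 1) →⋆ₙₐ[ℂ] A n))
    (s : ∀ n, ℕ → (A n →⋆ₙₐ[ℂ] A (n + 1)))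
    -- simplicial identities
    (hds_lt : ∀ n, ∀ i j : ℕ, i < j → j ≤ n + 1 →
      ∀ x : A (n + 1), d (n + 1) i (s (n + 1) j x) = s n (j - 1) (d n i x))
    (hds_eq : ∀ n, ∀ j : ℕ, j ≤ n → ∀ x : A n, d n j (s n j x) = x)
    (hds_eq' : ∀ n, ∀ j : ℕ, j ≤ n → ∀ x : A n, d n (j + 1) (s n j x) = x)
    (hds_gt : ∀ n, ∀ i j : ℕ, j + 1 < i → i ≤ n + 2 →
      ∀ x : A (n + 1), d (n + 1) i (s (n + 1) j x) = s n j (d n (i - 1) x))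
    -- `n = m + 1 ≥ 1`
    (m : ℕ) :
    ∀ x : A (m + 1), (∀ i ≤ m + 1, d m i x = 0) →
      ∃ y : A (m + 2), (∀ i ≤ m + 1, d (m + 1) i y = 0) ∧ d (m + 1) (m + 2) y = x := by
  -- `d` and `s` are `ℂ`-linear for the separately given `NormedSpace ℂ` structures, which
  -- together with the remaining data form another C*-algebra structure on each `A n`.
  let _ (n : ℕ) : NonUnitalCStarAlgebra (A n) :=
    { toNormedSpace := inferInstance, toIsScalarTower := inferInstance,
      toSMulCommClass := inferInstance, toStarModule := inferInstance }
  exact fun _ hx => exists_faces_eq_zero_and_last_face_eq d s hds_lt hds_eq hds_eq' hds_gt hx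

/-- Let `A.` be a simplicial C*-algebra: C*-algebras `A n` with
face maps `d n i : A (n+1) →⋆ₙₐ[ℂ] A n` and degeneracies
`s n j : A n →⋆ₙₐ[ℂ] A (n+1)` (star ℂ-algebra homomorphisms) satisfying the
simplicial identities.  Then for every `n = m + 1 ≥ 1` the combinatorial
homotopy group `π_n(A.) = A^n_n / ∂_{n+1}(A^n_{n+1})` vanishes, i.e. the map
`∂_{n+1} : A^n_{n+1} → A^n_n` is surjective, where
`A^k_m = ∩_{i=0}^{k} ker(∂_i : A_m → A_{m-1})`. -/
theorem statement2
    (A : ℕ → Type*) [∀ n, NonUnitalCStarAlgebra (A n)]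
    [∀ n, NormedSpace ℂ (A n)] [∀ n, IsScalarTower ℂ (A n) (A n)]
    [∀ n, SMulCommClass ℂ (A n) (A n)] [∀ n, StarModule ℂ (A n)]
    (d : ∀ n, ℕ → (A (n + 1) →⋆ₙₐ[ℂ] A n))
    (s : ∀ n, ℕ → (A n →⋆ₙₐ[ℂ] A (n + 1)))
    -- simplicial identities
    (hdd : ∀ n, ∀ i j : ℕ, i < j → j ≤ n + 2 →
      ∀ x : A (n + 2), d n i (d (n + 1) j x) = d n (j - 1) (d (n + 1) i x))
    (hds_lt : ∀ n, ∀ i j : ℕ, i < j → j ≤ n + 1 →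
      ∀ x : A (n + 1), d (n + 1) i (s (n + 1) j x) = s n (j - 1) (d n i x))
    (hds_eq : ∀ n, ∀ j : ℕ, j ≤ n → ∀ x : A n, d n j (s n j x) = x)
    (hds_eq' : ∀ n, ∀ j : ℕ, j ≤ n → ∀ x : A n, d n (j + 1) (s n j x) = x)
    (hds_gt : ∀ n, ∀ i j : ℕ, j + 1 < i → i ≤ n + 2 →
      ∀ x : A (n + 1), d (n + 1) i (s (n + 1) j x) = s n j (d n (i - 1) x))
    (hss : ∀ n, ∀ i j : ℕ, i ≤ j → j ≤ n →
      ∀ x : A n, s (n + 1) i (s n j x) = s (n + 1) (j + 1) (s n i x))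
    -- `n = m + 1 ≥ 1`
    (m : ℕ) :
    ∀ x : A (m + 1), (∀ i ≤ m + 1, d m i x = 0) →
      ∃ y : A (m + 2), (∀ i ≤ m + 1, d (m + 1) i y = 0) ∧ d (m + 1) (m + 2) y = x :=
  statement2_general A d s hds_lt hds_eq hds_eq' hds_gt m
end

section
/- Let F : Δ₊^op → Ab be an augmented simplicial abelian group such that for each fixed internal degree the underlying simplicial abelian group {n ↦ F(n)}_{n≥0} has vanishing homotopy groups above dimension 0 and π_0 equal to F(−1). Then for each n ≥ 0 and each −1 ≤ j < n, the map of iterated kernels f F^j_n → f F^j_{n-1} induced by ∂_{j+1} is surjective, where f F^j_n = ∩_{k=0}^{j} ker(∂_k : F(n) → F(n−1)). -/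
/-!
For `j < n - 1` the degeneracy `s_{j+1}` already gives the lift: `∂_{j+1} s_{j+1} = id`,
and `∂_i s_{j+1} = s_j ∂_i` for `i ≤ j` keeps it in the iterated kernel. Likewise `s_0` is a
section of `∂_0` above the augmentation. So acyclicity enters only in the top case `j = n - 1`
and through surjectivity of the augmentation.
-/

section

variable {B : ℕ → Type*} [∀ k, AddCommGroup (B k)]
  (D : ∀ k, ℕ → (B (k + 1) →+ B k)) (S : ∀ k, ℕ → (B (k + 1) →+ B (k + 2)))

theorem surjective_face_of_face_comp_degeneracy
    (hds_eq : ∀ k, ∀ j : ℕ, j ≤ k → ∀ x : B (k + 1), D (k + 1) j (S k j x) = x)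
    {k j : ℕ} (hj : j ≤ k) : Function.Surjective (D (k + 1) j) :=
  fun x => ⟨S k j x, hds_eq k j hj x⟩

theorem face_degeneracy_succ_eq_zero
    (hds_lt : ∀ m, ∀ i j : ℕ, i < j → j ≤ m + 1 →
      ∀ x : B (m + 2), D (m + 2) i (S (m + 1) j x) = S m (j - 1) (D (m + 1) i x))
    {m j : ℕ} (hj : j ≤ m) {x : B (m + 2)} (hx : ∀ i ≤ j, D (m + 1) i x = 0) :
    ∀ i ≤ j, D (m + 2) i (S (m + 1) (j + 1) x) = 0 := by
  intro i hi
  rw [hds_lt m i (j + 1) (by omega) (by omega) x, hx i hi, map_zero]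

theorem exists_lift_of_faces_eq_zero
    (hds_lt : ∀ m, ∀ i j : ℕ, i < j → j ≤ m + 1 →
      ∀ x : B (m + 2), D (m + 2) i (S (m + 1) j x) = S m (j - 1) (D (m + 1) i x))
    (hds_eq : ∀ k, ∀ j : ℕ, j ≤ k → ∀ x : B (k + 1), D (k + 1) j (S k j x) = x)
    (hres : ∀ k, ∀ x : B (k + 1), (∀ i ≤ k, D k i x = 0) →
      ∃ y : B (k + 2), (∀ i ≤ k, D (k + 1) i y = 0) ∧ D (k + 1) (k + 1) y = x)
    {m j : ℕ} (hj : j ≤ m) (x : B (m + 1)) (hx : ∀ i ≤ j, D m i x = 0) :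
    ∃ y : B (m + 2), (∀ i ≤ j, D (m + 1) i y = 0) ∧ D (m + 1) (j + 1) y = x := by
  rcases hj.eq_or_lt with rfl | hjm
  · exact hres j x hx
  · obtain ⟨m, rfl⟩ : ∃ m', m = m' + 1 := ⟨m - 1, by omega⟩
    exact ⟨S (m + 1) (j + 1) x, face_degeneracy_succ_eq_zero D S hds_lt (by omega) hx,
      hds_eq (m + 1) (j + 1) (by omega) x⟩

end

-- `B k` is `F(k - 1)`, and `D 0 0 : F(0) → F(-1)` is the augmentation.
theorem statement9_general
    (B : ℕ → Type*) [∀ k, AddCommGroup (B k)]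
    (D : ∀ k, ℕ → (B (k + 1) →+ B k))
    (S : ∀ k, ℕ → (B (k + 1) →+ B (k + 2)))
    -- simplicial identities (including those involving the augmentation)
    (hds_lt : ∀ m, ∀ i j : ℕ, i < j → j ≤ m + 1 →
      ∀ x : B (m + 2), D (m + 2) i (S (m + 1) j x) = S m (j - 1) (D (m + 1) i x))
    (hds_eq : ∀ k, ∀ j : ℕ, j ≤ k → ∀ x : B (k + 1), D (k + 1) j (S k j x) = x)
    -- the simplicial abelian group `{n ↦ F(n)}` is a resolution of `F(-1)`
    (hres : ∀ k, ∀ x : B (k + 1), (∀ i ≤ k, D k i x = 0) →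
      ∃ y : B (k + 2), (∀ i ≤ k, D (k + 1) i y = 0) ∧ D (k + 1) (k + 1) y = x)
    (hsurj : Function.Surjective (D 0 0)) :
    -- case `j = −1`: `∂_0 : F(n) → F(n−1)` is surjective for all `n ≥ 0`
    (∀ n, Function.Surjective (D n 0)) ∧
    -- case `0 ≤ j < n = m+1`
    (∀ m, ∀ j ≤ m, ∀ x : B (m + 1), (∀ i ≤ j, D m i x = 0) →
      ∃ y : B (m + 2), (∀ i ≤ j, D (m + 1) i y = 0) ∧ D (m + 1) (j + 1) y = x) := by
  refine ⟨fun n => ?_, fun m j hj x hx =>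
    exists_lift_of_faces_eq_zero D S hds_lt hds_eq hres hj x hx⟩
  cases n with
  | zero => exact hsurj
  | succ k => exact surjective_face_of_face_comp_degeneracy D S hds_eq k.zero_le

/-- Let `F : Δ₊^op → Ab` be an augmented simplicial abelian
group.  We encode it as `B k = F(k-1)` (so `B 0 = F(-1)`), with face maps
`D k i : B (k+1) →+ B k` for `0 ≤ i ≤ k` (`D 0 0` being the augmentation
`ε : F(0) → F(-1)`) and degeneracies `S k j : B (k+1) →+ B (k+2)` for
`0 ≤ j ≤ k`, satisfying the simplicial identities.  Assume that in each degree
the simplicial abelian group `{n ↦ F(n)}` has vanishing homotopy above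
dimension `0` and `π₀ = F(-1)` (hypotheses `hres`, `hsurj`).  Then for each
`n ≥ 0` and `−1 ≤ j < n`, the map of iterated kernels
`f F^j_n → f F^j_{n-1}` (where `f F^j_n = ∩_{k=0}^{j} ker ∂_k`) induced by
`∂_{j+1}` is surjective: the case `j = −1` is the first conjunct, the case
`0 ≤ j < n` (with `n = m+1`) the second. -/
theorem statement9
    (B : ℕ → Type*) [∀ k, AddCommGroup (B k)]
    (D : ∀ k, ℕ → (B (k + 1) →+ B k))
    (S : ∀ k, ℕ → (B (k + 1) →+ B (k + 2)))
    -- simplicial identities (including those involving the augmentation)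
    (hdd : ∀ k, ∀ i j : ℕ, i < j → j ≤ k + 1 →
      ∀ x : B (k + 2), D k i (D (k + 1) j x) = D k (j - 1) (D (k + 1) i x))
    (hds_lt : ∀ m, ∀ i j : ℕ, i < j → j ≤ m + 1 →
      ∀ x : B (m + 2), D (m + 2) i (S (m + 1) j x) = S m (j - 1) (D (m + 1) i x))
    (hds_eq : ∀ k, ∀ j : ℕ, j ≤ k → ∀ x : B (k + 1), D (k + 1) j (S k j x) = x)
    (hds_eq' : ∀ k, ∀ j : ℕ, j ≤ k → ∀ x : B (k + 1), D (k + 1) (j + 1) (S k j x) = x)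
    (hds_gt : ∀ m, ∀ i j : ℕ, j + 1 < i → i ≤ m + 2 →
      ∀ x : B (m + 2), D (m + 2) i (S (m + 1) j x) = S m j (D (m + 1) (i - 1) x))
    (hss : ∀ k, ∀ i j : ℕ, i ≤ j → j ≤ k →
      ∀ x : B (k + 1), S (k + 1) i (S k j x) = S (k + 1) (j + 1) (S k i x))
    -- the simplicial abelian group `{n ↦ F(n)}` is a resolution of `F(-1)`
    (hres : ∀ k, ∀ x : B (k + 1), (∀ i ≤ k, D k i x = 0) →
      ∃ y : B (k + 2), (∀ i ≤ k, D (k + 1) i y = 0) ∧ D (k + 1) (k + 1) y = x)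
    (hsurj : Function.Surjective (D 0 0)) :
    -- case `j = −1`: `∂_0 : F(n) → F(n−1)` is surjective for all `n ≥ 0`
    (∀ n, Function.Surjective (D n 0)) ∧
    -- case `0 ≤ j < n = m+1`
    (∀ m, ∀ j ≤ m, ∀ x : B (m + 1), (∀ i ≤ j, D m i x = 0) →
      ∃ y : B (m + 2), (∀ i ≤ j, D (m + 1) i y = 0) ∧ D (m + 1) (j + 1) y = x) :=
  statement9_general B D S hds_lt hds_eq hres hsurj
end

section
/- Let G. be a simplicial group with face maps ∂_i and degeneracies s_j, and suppose the complex of subgroups {Γ^{n-2}_{n-1}}_{n≥1} with differential ∂_{n-1} is exact (i.e., G. is a resolution). Let Γ^k_m = ∩_{i=0}^{k} ker(∂_i). Then H_2 of the chain complex D_* (with D_n = H_1(BΓ^{n-2}_{n-1}) = (Γ^{n-2}_{n-1})_{ab} ⊗ ℚ and differential induced by ∂_{n-1}) equals (Γ^0_0 ∩ [Γ_0, Γ_0]) / [Γ^0_0, Γ^0_0] ⊗ ℚ, which by Hopf's formula computes H_2(Bπ; ℚ) where π = π_0(G.). -/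
/-!
The differential `D_2 → D_1` factors as `ℚ ⊗ (Γ^0_1)_ab ↠ ℚ ⊗ R_ab → ℚ ⊗ (Γ_0)_ab` with
`R = ∂_1 Γ^0_1`. Since the resolution is exact in degree 1, `Γ^1_2 → Γ^0_1 → R → 1` is exact;
abelianization is right exact and `ℚ` is flat over `ℤ`, so `H_2(D_*)` is the kernel of
`ℚ ⊗ R_ab → ℚ ⊗ (Γ_0)_ab`. By flatness once more this kernel is `ℚ` tensored with
`ker (R_ab → (Γ_0)_ab) = (R ∩ [Γ_0, Γ_0]) / [R, R]`.
-/

open scoped TensorProduct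

/-- The map `H_1(BH;ℚ) → H_1(BK;ℚ)`, i.e. `ℚ ⊗ H_ab → ℚ ⊗ K_ab`, induced by a
group homomorphism `f : H → K`. -/
noncomputable def h1Map {H K : Type*} [Group H] [Group K] (f : H →* K) :
    ℚ ⊗[ℤ] Additive (Abelianization H) →ₗ[ℤ] ℚ ⊗[ℤ] Additive (Abelianization K) :=
  TensorProduct.map LinearMap.id
    ((MonoidHom.toAdditive (Abelianization.map f)).toIntLinearMap)

namespace Abelianization

variable {G H K : Type*} [Group G] [Group H] [Group K]

theorem of_surjective : Function.Surjective (of : G →* Abelianization G) :=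
  QuotientGroup.mk'_surjective _

theorem map_surjective {f : G →* H} (hf : Function.Surjective f) :
    Function.Surjective (map f) := by
  intro y
  obtain ⟨y, rfl⟩ := of_surjective y
  obtain ⟨x, rfl⟩ := hf y
  exact ⟨of x, map_of f x⟩

theorem ker_map_eq_range_map {f : G →* H} {g : H →* K} (hfg : f.range = g.ker)
    (hg : Function.Surjective g) : (map g).ker = (map f).range := by
  refine le_antisymm (fun y hy => ?_) ?_
  · -- `[K, K] = g [H, H]`, so `y` is a commutator times an element of `ker g = range f`.
    obtain ⟨y, rfl⟩ := of_surjective y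
    have hgy : g y ∈ (commutator H).map g := by
      rw [commutator_def, Subgroup.map_commutator, Subgroup.map_top_of_surjective g hg,
        ← commutator_def, ← ker_of, MonoidHom.mem_ker, ← map_of]
      exact hy
    obtain ⟨c, hc, hcy⟩ := hgy
    obtain ⟨x, hx⟩ : c⁻¹ * y ∈ f.range := by
      rw [hfg, MonoidHom.mem_ker, map_mul, map_inv, hcy, inv_mul_cancel]
    refine ⟨of x, ?_⟩
    rw [map_of, hx, map_mul, map_inv, (ker_of (G := H)).ge hc, inv_one, one_mul]
  · rintro _ ⟨x, rfl⟩
    obtain ⟨x, rfl⟩ := of_surjective x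
    have hx : f x ∈ g.ker := hfg ▸ ⟨x, rfl⟩
    rw [MonoidHom.mem_ker, map_of, map_of, MonoidHom.mem_ker.mp hx, map_one]

noncomputable def kerMapSubtypeEquiv (H : Subgroup G) :
    (map H.subtype).ker ≃*
      (commutator G).comap H.subtype ⧸
        (commutator H).comap ((commutator G).comap H.subtype).subtype :=
  let A := (commutator G).comap H.subtype
  let φ : A →* (map H.subtype).ker :=
    (of.comp A.subtype).codRestrict _ fun a => by
      rw [MonoidHom.mem_ker, MonoidHom.comp_apply, map_of, ← MonoidHom.mem_ker, ker_of]
      exact a.2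
  have hφ : Function.Surjective φ := by
    rintro ⟨y, hy⟩
    obtain ⟨h, rfl⟩ := of_surjective y
    rw [MonoidHom.mem_ker, map_of, ← MonoidHom.mem_ker, ker_of] at hy
    exact ⟨⟨h, hy⟩, rfl⟩
  have hker : φ.ker = (commutator H).comap A.subtype := by
    ext a
    rw [MonoidHom.mem_ker, Subtype.ext_iff, Subgroup.mem_comap, ← ker_of]
    rfl
  ((QuotientGroup.quotientMulEquivOfEq hker.symm).trans
    (QuotientGroup.quotientKerEquivOfSurjective φ hφ)).symm

end Abelianization

noncomputable def AddMonoidHom.quotientRangeEquivKerOfExact {A B C D : Type*} [AddCommGroup A]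
    [AddCommGroup B] [AddCommGroup C] [AddCommGroup D] {f : A →+ B} {g : B →+ C}
    (h : C →+ D) {k : B →+ D} (hfg : Function.Exact f g) (hg : Function.Surjective g)
    (hk : ∀ x, k x = h (g x)) :
    k.ker ⧸ f.range.addSubgroupOf k.ker ≃+ h.ker :=
  let φ : k.ker →+ h.ker := (g.comp k.ker.subtype).codRestrict _ fun x => by
    rw [AddMonoidHom.mem_ker, AddMonoidHom.comp_apply, AddSubgroup.coe_subtype, ← hk]
    exact x.2
  have hφ : Function.Surjective φ := by
    rintro ⟨z, hz⟩
    obtain ⟨x, rfl⟩ := hg z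
    exact ⟨⟨x, by rwa [AddMonoidHom.mem_ker, hk]⟩, rfl⟩
  have hker : φ.ker = f.range.addSubgroupOf k.ker := by
    ext x
    rw [AddMonoidHom.mem_ker, AddSubgroup.mem_addSubgroupOf, Subtype.ext_iff]
    exact hfg x
  (QuotientAddGroup.quotientAddEquivOfEq hker.symm).trans
    (QuotientAddGroup.quotientKerEquivOfSurjective φ hφ)

section h1Map

variable {G H K : Type*} [Group G] [Group H] [Group K]

theorem h1Map_comp (f : G →* H) (g : H →* K) : h1Map (g.comp f) = h1Map g ∘ₗ h1Map f := by
  rw [h1Map, ← Abelianization.map_comp]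
  exact TensorProduct.ext' fun _ _ => rfl

theorem h1Map_surjective {f : G →* H} (hf : Function.Surjective f) :
    Function.Surjective (h1Map f) :=
  LinearMap.lTensor_surjective ℚ (Abelianization.map_surjective hf)

theorem h1Map_exact {f : G →* H} {g : H →* K} (hfg : f.range = g.ker)
    (hg : Function.Surjective g) : Function.Exact (h1Map f) (h1Map g) := by
  refine Module.Flat.lTensor_exact ℚ (LinearMap.exact_iff.mpr ?_)
  rw [AddMonoidHom.coe_toIntLinearMap_ker, AddMonoidHom.coe_toIntLinearMap_range,
    MonoidHom.coe_toAdditive_ker, MonoidHom.coe_toAdditive_range,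
    Abelianization.ker_map_eq_range_map hfg hg]

noncomputable def h1MapSubtypeKerEquiv (H : Subgroup G) :
    LinearMap.ker (h1Map H.subtype) ≃ₗ[ℤ] ℚ ⊗[ℤ] Additive (Abelianization
      ((commutator G).comap H.subtype ⧸
        (commutator H).comap ((commutator G).comap H.subtype).subtype)) :=
  (LinearMap.tensorKerEquiv ℤ ℚ _).symm ≪≫ₗ
    TensorProduct.congr (LinearEquiv.refl ℤ ℚ)
      (MulEquiv.toAdditive (Abelianization.equivOfComm.trans
        (Abelianization.kerMapSubtypeEquiv H).abelianizationCongr)).toIntLinearEquiv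

end h1Map

theorem MonoidHom.range_eq_ker_subgroupMap_of_exact {G₀ G₁ G₂ : Type*} [Group G₀] [Group G₁]
    [Group G₂] {d₀₀ d₀₁ : G₁ →* G₀} {d₁₀ d₁₁ d₁₂ : G₂ →* G₁}
    (hdd : ∀ x, d₀₁ (d₁₂ x) = d₀₁ (d₁₁ x))
    (hres : ∀ y, d₀₀ y = 1 → d₀₁ y = 1 → ∃ z, d₁₀ z = 1 ∧ d₁₁ z = 1 ∧ d₁₂ z = y)
    (δ : ↥(d₁₀.ker ⊓ d₁₁.ker) →* d₀₀.ker) (hδ : ∀ x, (δ x : G₁) = d₁₂ x) :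
    δ.range = (d₀₁.subgroupMap d₀₀.ker).ker := by
  ext y
  constructor
  · rintro ⟨x, rfl⟩
    refine Subtype.ext ?_
    change d₀₁ (δ x) = 1
    rw [hδ, hdd, (Subgroup.mem_inf.mp x.2).2, map_one]
  · intro hy
    obtain ⟨z, hz₀, hz₁, hz₂⟩ := hres y y.2 (congrArg Subtype.val hy)
    exact ⟨⟨z, hz₀, hz₁⟩, Subtype.ext ((hδ _).trans hz₂)⟩

theorem statement10_general
    (G : ℕ → Type*) [∀ n, Group (G n)]
    (d : ∀ n, ℕ → (G (n + 1) →* G n))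
    -- simplicial identities
    (hdd : ∀ n, ∀ i j : ℕ, i < j → j ≤ n + 2 →
      ∀ x : G (n + 2), d n i (d (n + 1) j x) = d n (j - 1) (d (n + 1) i x))
    -- resolution: the higher homotopy groups of `G.` vanish
    (hres : ∀ m, ∀ x : G (m + 1), (∀ i ≤ m + 1, d m i x = 1) →
      ∃ y : G (m + 2), (∀ i ≤ m + 1, d (m + 1) i y = 1) ∧ d (m + 1) (m + 2) y = x) :
    ∀ δ3 : ↥(MonoidHom.ker (d 1 0) ⊓ MonoidHom.ker (d 1 1)) →* ↥(MonoidHom.ker (d 0 0)),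
      (∀ x, (δ3 x : G 1) = d 1 2 (x : G 2)) →
      Nonempty (
        ((↥(AddMonoidHom.ker
              ((h1Map ((d 0 1).comp (MonoidHom.ker (d 0 0)).subtype)).toAddMonoidHom)))
          ⧸ ((AddMonoidHom.range ((h1Map δ3).toAddMonoidHom)).addSubgroupOf
              (AddMonoidHom.ker
                ((h1Map ((d 0 1).comp (MonoidHom.ker (d 0 0)).subtype)).toAddMonoidHom))))
        ≃+
        (ℚ ⊗[ℤ] Additive (Abelianization
          (↥((commutator (G 0)).comap
                (Subgroup.map (d 0 1) (MonoidHom.ker (d 0 0))).subtype)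
            ⧸ ((commutator ↥(Subgroup.map (d 0 1) (MonoidHom.ker (d 0 0)))).comap
                ((commutator (G 0)).comap
                  (Subgroup.map (d 0 1) (MonoidHom.ker (d 0 0))).subtype).subtype)))))
      := by
  intro δ3 hδ3
  have hexact : δ3.range = ((d 0 1).subgroupMap (d 0 0).ker).ker :=
    MonoidHom.range_eq_ker_subgroupMap_of_exact (hdd 0 1 2 one_lt_two le_rfl) (fun y h₀ h₁ => by
      obtain ⟨z, hz, hz₂⟩ := hres 0 y fun i hi => by interval_cases i <;> assumption
      exact ⟨z, hz 0 zero_le_one, hz 1 le_rfl, hz₂⟩) δ3 hδ3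
  have hsurj := (d 0 1).subgroupMap_surjective (d 0 0).ker
  have hfactor : (d 0 1).comp (d 0 0).ker.subtype =
      ((d 0 0).ker.map (d 0 1)).subtype.comp ((d 0 1).subgroupMap (d 0 0).ker) := rfl
  exact ⟨(AddMonoidHom.quotientRangeEquivKerOfExact (h1Map _).toAddMonoidHom
    (h1Map_exact hexact hsurj) (h1Map_surjective hsurj)
    (fun x => by rw [hfactor, h1Map_comp]; rfl)).trans (h1MapSubtypeKerEquiv _).toAddEquiv⟩

/-- Let `G.` be a free simplicial resolution (each `G n` free,
`π_n(G.) = 0` for `n > 0`) of `π = π₀(G.)`.  Let `D_*` be the chain complex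
with `D_n = H_1(BΓ^{n-2}_{n-1}; ℚ) = (Γ^{n-2}_{n-1})_ab ⊗ ℚ` and differential
induced by `∂_{n-1}`.  Then `H_2(D_*)` is isomorphic to
`((Γ^0_0 ∩ [Γ_0,Γ_0]) / [Γ^0_0,Γ^0_0]) ⊗ ℚ` where `Γ^0_0 = ∂_1(ker ∂_0)`,
which by Hopf's formula (`H_2(Bπ) ≅ (R ∩ [F,F])/[F,R]` for `π = F/R`, `F`
free, `R = Γ^0_0`) computes `H_2(Bπ; ℚ)`.  (The Hopf quotient is an abelian
group; we take its abelianization — which is itself — so as to tensor with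
`ℚ`.)  Here `H_2(D_*) = ker(d^D_2)/im(d^D_3)` with `d^D_2 : (Γ^0_1)_ab ⊗ ℚ →
(Γ_0)_ab ⊗ ℚ` induced by `∂_1` and `d^D_3 : (Γ^1_2)_ab ⊗ ℚ → (Γ^0_1)_ab ⊗ ℚ`
induced by `∂_2` (given as any `δ3` covering `∂_2`). -/
theorem statement10
    (G : ℕ → Type*) [∀ n, Group (G n)] [∀ n, IsFreeGroup (G n)]
    (d : ∀ n, ℕ → (G (n + 1) →* G n))
    (s : ∀ n, ℕ → (G n →* G (n + 1)))
    -- simplicial identities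
    (hdd : ∀ n, ∀ i j : ℕ, i < j → j ≤ n + 2 →
      ∀ x : G (n + 2), d n i (d (n + 1) j x) = d n (j - 1) (d (n + 1) i x))
    (hds_lt : ∀ n, ∀ i j : ℕ, i < j → j ≤ n + 1 →
      ∀ x : G (n + 1), d (n + 1) i (s (n + 1) j x) = s n (j - 1) (d n i x))
    (hds_eq : ∀ n, ∀ j : ℕ, j ≤ n → ∀ x : G n, d n j (s n j x) = x)
    (hds_eq' : ∀ n, ∀ j : ℕ, j ≤ n → ∀ x : G n, d n (j + 1) (s n j x) = x)
    (hds_gt : ∀ n, ∀ i j : ℕ, j + 1 < i → i ≤ n + 2 →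
      ∀ x : G (n + 1), d (n + 1) i (s (n + 1) j x) = s n j (d n (i - 1) x))
    (hss : ∀ n, ∀ i j : ℕ, i ≤ j → j ≤ n →
      ∀ x : G n, s (n + 1) i (s n j x) = s (n + 1) (j + 1) (s n i x))
    -- resolution: the higher homotopy groups of `G.` vanish
    (hres : ∀ m, ∀ x : G (m + 1), (∀ i ≤ m + 1, d m i x = 1) →
      ∃ y : G (m + 2), (∀ i ≤ m + 1, d (m + 1) i y = 1) ∧ d (m + 1) (m + 2) y = x) :
    ∀ δ3 : ↥(MonoidHom.ker (d 1 0) ⊓ MonoidHom.ker (d 1 1)) →* ↥(MonoidHom.ker (d 0 0)),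
      (∀ x, (δ3 x : G 1) = d 1 2 (x : G 2)) →
      Nonempty (
        ((↥(AddMonoidHom.ker
              ((h1Map ((d 0 1).comp (MonoidHom.ker (d 0 0)).subtype)).toAddMonoidHom)))
          ⧸ ((AddMonoidHom.range ((h1Map δ3).toAddMonoidHom)).addSubgroupOf
              (AddMonoidHom.ker
                ((h1Map ((d 0 1).comp (MonoidHom.ker (d 0 0)).subtype)).toAddMonoidHom))))
        ≃+
        (ℚ ⊗[ℤ] Additive (Abelianization
          (↥((commutator (G 0)).comap
                (Subgroup.map (d 0 1) (MonoidHom.ker (d 0 0))).subtype)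
            ⧸ ((commutator ↥(Subgroup.map (d 0 1) (MonoidHom.ker (d 0 0)))).comap
                ((commutator (G 0)).comap
                  (Subgroup.map (d 0 1) (MonoidHom.ker (d 0 0))).subtype).subtype))))) :=
  statement10_general G d hdd hres
end
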